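/- Let 𝒯 be a Krull–Schmidt, Hom-finite triangulated category over an algebraically closed field k, R a basic rigid object with Γ = End_𝒯(R), and X ∈ pr(R) an object without direct summands in add R[1]. Then the right Γ-module Hom_𝒯(R, X) has projective dimension at most 1 if and only if X(R[1], R[1]) = 0, i.e., every endomorphism of R[1] factoring through add X is zero. -/

import Mathlib

/-!
Formalization of results from "Relative rigid objects in triangulated categories"
by Fu–Geng–Liu.  Throughout, `C` is a Krull–Schmidt, Hom-finite, `k`-linear
triangulated category over an algebraically closed field `k` (Krull–Schmidt is
encoded as: Hom-finite over `k` together with idempotent completeness), with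
suspension functor `⟦1⟧`.
-/

open CategoryTheory Limits Pretriangulated Opposite

universe w v u

namespace RelRigid

variable {k : Type w} [Field k] [IsAlgClosed k]
variable {C : Type u} [Category.{v} C] [Preadditive C] [CategoryTheory.Linear k C]
  [HasZeroObject C] [HasShift C ℤ] [∀ n : ℤ, (shiftFunctor C n).Additive]
  [Pretriangulated C] [HasFiniteBiproducts C] [IsIdempotentComplete C]
  [∀ X Y : C, Module.Finite k (X ⟶ Y)]

/-- `X` belongs to `add R`: it is a direct summand of a finite direct sum of copies of `R`. -/
def InAdd (R X : C) : Prop :=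
  ∃ (n : ℕ) (s : X ⟶ ⨁ (fun _ : Fin n => R)) (p : (⨁ (fun _ : Fin n => R)) ⟶ X),
    s ≫ p = 𝟙 X

/-- `Y` is a direct summand of `X`. -/
def IsSummand (Y X : C) : Prop := ∃ (s : Y ⟶ X) (p : X ⟶ Y), s ≫ p = 𝟙 Y

/-- The morphism `f` factors through `add Z`. -/
def FactorsThroughAdd (Z : C) {X Y : C} (f : X ⟶ Y) : Prop :=
  ∃ (Z' : C) (_ : InAdd Z Z') (g : X ⟶ Z') (h : Z' ⟶ Y), g ≫ h = f

/-- `X` is rigid: `Hom(X, X[1]) = 0`. -/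
def IsRigidObj (X : C) : Prop := ∀ f : X ⟶ X⟦(1 : ℤ)⟧, f = 0

/-- `X` is `R[1]`-rigid: `R[1](X, X[1]) = 0`, i.e. every morphism `X ⟶ X[1]`
factoring through `add (R[1])` vanishes. -/
def IsRelRigid (R X : C) : Prop :=
  ∀ f : X ⟶ X⟦(1 : ℤ)⟧, FactorsThroughAdd (R⟦(1 : ℤ)⟧) f → f = 0

/-- `X ∈ pr(R)`: there is a triangle `R₁ ⟶ R₀ ⟶ X ⟶ R₁[1]` with `R₀, R₁ ∈ add R`. -/
def InPr (R X : C) : Prop :=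
  ∃ (R₁ R₀ : C) (_ : InAdd R R₁) (_ : InAdd R R₀) (f : R₁ ⟶ R₀) (g : R₀ ⟶ X)
    (h : X ⟶ R₁⟦(1 : ℤ)⟧), Triangle.mk f g h ∈ distTriang C

/-- `X` is maximal `R[1]`-rigid with respect to `pr(R)`: `X ∈ pr(R)` is `R[1]`-rigid and
any `Z ∈ pr(R)` with `R[1](X ⊕ Z, (X ⊕ Z)[1]) = 0` satisfies `Z ∈ add X`. -/
def IsMaxRelRigid (R X : C) : Prop :=
  InPr R X ∧ IsRelRigid R X ∧ ∀ Z : C, InPr R Z → IsRelRigid R (X ⊞ Z) → InAdd X Z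

/-- `X` is indecomposable. -/
def Indecomp (X : C) : Prop :=
  ¬ IsZero X ∧ ∀ A B : C, Nonempty (X ≅ A ⊞ B) → IsZero A ∨ IsZero B

/-- `f` is a decomposition of `X` into indecomposable objects. -/
def IsDecomp (X : C) {n : ℕ} (f : Fin n → C) : Prop :=
  (∀ i, Indecomp (f i)) ∧ Nonempty (X ≅ ⨁ f)

/-- `|X| = n`: `X` has exactly `n` pairwise non-isomorphic indecomposable direct summands. -/
def NumIndec (X : C) (n : ℕ) : Prop :=
  ∃ g : Fin n → C, (∀ i, Indecomp (g i)) ∧ (∀ i j : Fin n, Nonempty (g i ≅ g j) → i = j) ∧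
    ∀ Y : C, Indecomp Y → (IsSummand Y X ↔ ∃ i : Fin n, Nonempty (Y ≅ g i))

/-- `X` is basic: it decomposes into pairwise non-isomorphic indecomposable objects. -/
def IsBasic (X : C) : Prop :=
  ∃ (n : ℕ) (f : Fin n → C), IsDecomp X f ∧ ∀ i j : Fin n, Nonempty (f i ≅ f j) → i = j

/-- `Hom(R, Y)` is a left module over `End (op R)` (equivalently, a right module over the
endomorphism algebra `Γ = End R`), via precomposition. -/
instance homModule (R Y : C) : Module (End (op R)) (R ⟶ Y) where
  smul g f := g.unop ≫ f
  one_smul f := by show (1 : End (op R)).unop ≫ f = f; simp [End.one_def]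
  mul_smul g h f := by
    show (g * h).unop ≫ f = g.unop ≫ h.unop ≫ f
    simp [End.mul_def]
  smul_zero g := by show g.unop ≫ (0 : _ ⟶ _) = 0; simp
  smul_add g f₁ f₂ := by
    show g.unop ≫ (f₁ + f₂) = g.unop ≫ f₁ + g.unop ≫ f₂
    simp
  add_smul g h f := by
    show (g + h).unop ≫ f = g.unop ≫ f + h.unop ≫ f
    rw [show (g + h).unop = g.unop + h.unop from rfl, Preadditive.add_comp]
  zero_smul f := by show (0 : End (op R)).unop ≫ f = 0; simp

/-- Postcomposition `Hom(R, X) → Hom(R, Y)` with `φ : X ⟶ Y`, i.e. the action of the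
functor `Hom(R, −)` on morphisms; it is linear over `End (op R)`. -/
def homMap (R : C) {X Y : C} (φ : X ⟶ Y) : (R ⟶ X) →ₗ[End (op R)] (R ⟶ Y) where
  toFun u := u ≫ φ
  map_add' u v := by simp [Preadditive.add_comp]
  map_smul' g u := by
    show (g.unop ≫ u) ≫ φ = g.unop ≫ (u ≫ φ)
    simp [Category.assoc]

/-- `T` is a cluster tilting object:
`add T = {X : Hom(T, X[1]) = 0} = {X : Hom(X, T[1]) = 0}`. -/
def IsClusterTilting (T : C) : Prop :=
  (∀ X : C, InAdd T X ↔ ∀ f : T ⟶ X⟦(1 : ℤ)⟧, f = 0) ∧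
  (∀ X : C, InAdd T X ↔ ∀ f : X ⟶ T⟦(1 : ℤ)⟧, f = 0)

/-- `T` is maximal `R[1]`-rigid with respect to the whole category `C`. -/
def IsMaxRelRigidAll (R T : C) : Prop :=
  IsRelRigid R T ∧ ∀ Z : C, IsRelRigid R (T ⊞ Z) → InAdd T Z

/-- `T` is `R[1]`-cluster tilting: `T` is `R[1]`-rigid and `|T| = |R|`. -/
def IsRelClusterTilting (R T : C) : Prop :=
  IsRelRigid R T ∧ ∃ n : ℕ, NumIndec T n ∧ NumIndec R n

/-- `S` is presilting: `Hom(S, S[i]) = 0` for all `i > 0`. -/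
def IsPresilting (S : C) : Prop := ∀ i : ℤ, 0 < i → ∀ f : S ⟶ S⟦i⟧, f = 0

/-- A predicate on objects defines a thick subcategory: closed under isomorphisms,
shifts, extensions (cones) and direct summands. -/
def IsThickClosed (P : C → Prop) : Prop :=
  (∀ X Y : C, (X ≅ Y) → P X → P Y) ∧
  (∀ (X : C) (n : ℤ), P X → P (X⟦n⟧)) ∧
  (∀ T : Triangle C, T ∈ (distTriang C) → P T.obj₁ → P T.obj₂ → P T.obj₃) ∧
  (∀ X Y : C, IsSummand Y X → P X → P Y)

/-- The smallest thick subcategory of `C` containing `S` is `C` itself. -/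
def ThickGenerates (S : C) : Prop :=
  ∀ P : C → Prop, IsThickClosed P → P S → ∀ X : C, P X

/-- `S` is silting: presilting and `thick S = C`. -/
def IsSilting (S : C) : Prop := IsPresilting S ∧ ThickGenerates S

/-- `C` is `n`-Calabi–Yau: there are bifunctorial isomorphisms
`Hom(X, Y) ≅ D Hom(Y, X[n])`, encoded by a perfect pairing
`Hom(X, Y) × Hom(Y, X[n]) → k` which is natural in both variables. -/
def IsCalabiYau (n : ℤ) : Prop :=
  ∃ pair : ∀ X Y : C, (X ⟶ Y) →ₗ[k] ((Y ⟶ X⟦n⟧) →ₗ[k] k),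
    (∀ X Y : C, Function.Bijective (pair X Y)) ∧
    (∀ (X' X Y : C) (u : X' ⟶ X) (f : X ⟶ Y) (g : Y ⟶ X'⟦n⟧),
      pair X' Y (u ≫ f) g = pair X Y f (g ≫ (shiftFunctor C n).map u)) ∧
    (∀ (X Y Y' : C) (v : Y ⟶ Y') (f : X ⟶ Y) (g : Y' ⟶ X⟦n⟧),
      pair X Y' (f ≫ v) g = pair X Y f (v ≫ g))

/-- `T` is `d`-rigid: `Hom(T, T[i]) = 0` for `i = 1, …, d`. -/
def IsDRigid (d : ℤ) (T : C) : Prop := ∀ i : ℤ, 1 ≤ i → i ≤ d → ∀ f : T ⟶ T⟦i⟧, f = 0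

/-- `T` is maximal `d`-rigid. -/
def IsMaxDRigid (d : ℤ) (T : C) : Prop :=
  IsDRigid d T ∧ ∀ Z : C, IsDRigid d (T ⊞ Z) → InAdd T Z

/-- `T` is a `d`-cluster tilting object. -/
def IsDClusterTilting (d : ℤ) (T : C) : Prop :=
  IsDRigid d T ∧
  ∀ X : C, (∀ i : ℤ, 1 ≤ i → i ≤ d → ∀ f : T ⟶ X⟦i⟧, f = 0) → InAdd T X

/-- `X` is a maximal rigid object. -/
def IsMaxRigidObj (X : C) : Prop :=
  IsRigidObj X ∧ ∀ Z : C, IsRigidObj (X ⊞ Z) → InAdd X Z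

/-- The isomorphism setoid on objects of `C` satisfying a predicate `p`. -/
def objSetoid (p : C → Prop) : Setoid {X : C // p X} where
  r X Y := Nonempty (X.1 ≅ Y.1)
  iseqv := ⟨fun _ => ⟨Iso.refl _⟩, fun ⟨e⟩ => ⟨e.symm⟩, fun ⟨e⟩ ⟨f⟩ => ⟨e.trans f⟩⟩

section Modules

variable (Γ : Type w) [Ring Γ]

/-- `f, g` is a minimal projective presentation `P₁ → P₀ → M → 0`:
both `P`s are projective, the sequence is exact with `g` surjective, and the kernels of
`g` and `f` are superfluous submodules (which encodes minimality). -/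
def IsMinProjPres {P₁ P₀ M : Type w} [AddCommGroup P₁] [Module Γ P₁]
    [AddCommGroup P₀] [Module Γ P₀] [AddCommGroup M] [Module Γ M]
    (f : P₁ →ₗ[Γ] P₀) (g : P₀ →ₗ[Γ] M) : Prop :=
  Module.Projective Γ P₁ ∧ Module.Projective Γ P₀ ∧
  Function.Surjective g ∧ Function.Exact f g ∧
  (∀ K : Submodule Γ P₀, LinearMap.ker g ⊔ K = ⊤ → K = ⊤) ∧
  (∀ K : Submodule Γ P₁, LinearMap.ker f ⊔ K = ⊤ → K = ⊤)

/-- `M` is `τ`-rigid, via the Adachi–Iyama–Reiten criterion: for a minimal projective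
presentation `P₁ →f P₀ → M → 0`, the map `Hom(f, M) : Hom(P₀, M) → Hom(P₁, M)` is
surjective. -/
def IsTauRigid (M : Type w) [AddCommGroup M] [Module Γ M] : Prop :=
  ∀ (P₁ P₀ : Type w) [AddCommGroup P₁] [Module Γ P₁] [AddCommGroup P₀] [Module Γ P₀],
    ∀ (f : P₁ →ₗ[Γ] P₀) (g : P₀ →ₗ[Γ] M), IsMinProjPres Γ f g →
    Function.Surjective (fun h : P₀ →ₗ[Γ] M => h ∘ₗ f)

/-- `(M, P)` is a `τ`-rigid pair: `M ∈ mod Γ` is `τ`-rigid, `P` is finitely generated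
projective and `Hom(P, M) = 0`. -/
def IsTauRigidPair (M P : Type w) [AddCommGroup M] [Module Γ M]
    [AddCommGroup P] [Module Γ P] : Prop :=
  Module.Finite Γ M ∧ IsTauRigid Γ M ∧
  Module.Finite Γ P ∧ Module.Projective Γ P ∧ ∀ h : P →ₗ[Γ] M, h = 0

/-- A module is indecomposable. -/
def ModIndec (M : Type w) [AddCommGroup M] [Module Γ M] : Prop :=
  Nontrivial M ∧ ∀ A B : Submodule Γ M, IsCompl A B → A = ⊥ ∨ B = ⊥

/-- An internal decomposition into indecomposable submodules. -/
def IsModDecomp {M : Type w} [AddCommGroup M] [Module Γ M] {n : ℕ}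
    (f : Fin n → Submodule Γ M) : Prop :=
  DirectSum.IsInternal f ∧ ∀ i, ModIndec Γ (f i)

/-- `|M| = n`: `M` has exactly `n` non-isomorphic indecomposable direct summands. -/
def NumIndecMod (M : Type w) [AddCommGroup M] [Module Γ M] (n : ℕ) : Prop :=
  ∃ (m : ℕ) (f : Fin m → Submodule Γ M) (g : Fin n → Submodule Γ M),
    IsModDecomp Γ f ∧ (∀ i, ModIndec Γ (g i)) ∧
    (∀ i j : Fin n, Nonempty (g i ≃ₗ[Γ] g j) → i = j) ∧
    (∀ i : Fin m, ∃ j : Fin n, Nonempty (f i ≃ₗ[Γ] g j)) ∧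
    (∀ j : Fin n, ∃ i : Fin m, Nonempty (f i ≃ₗ[Γ] g j))

/-- `M` is basic: it decomposes into pairwise non-isomorphic indecomposable submodules. -/
def ModBasic (M : Type w) [AddCommGroup M] [Module Γ M] : Prop :=
  ∃ (n : ℕ) (f : Fin n → Submodule Γ M), IsModDecomp Γ f ∧
    ∀ i j : Fin n, Nonempty (f i ≃ₗ[Γ] f j) → i = j

/-- `(M, P)` is a support `τ`-tilting pair: a `τ`-rigid pair with `|M| + |P| = |Γ|`. -/
def IsSuppTauTiltingPair (M P : Type w) [AddCommGroup M] [Module Γ M]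
    [AddCommGroup P] [Module Γ P] : Prop :=
  IsTauRigidPair Γ M P ∧
  ∃ nM nP nΓ : ℕ, NumIndecMod Γ M nM ∧ NumIndecMod Γ P nP ∧ NumIndecMod Γ Γ nΓ ∧
    nM + nP = nΓ

/-- `M` is a support `τ`-tilting module. -/
def IsSuppTauTilting (M : Type w) [AddCommGroup M] [Module Γ M] : Prop :=
  ∃ P : ModuleCat.{w} Γ, ModBasic Γ P ∧ IsSuppTauTiltingPair Γ M P

/-- `M` has projective dimension at most `1`. -/
def PdLeOne (M : Type w) [AddCommGroup M] [Module Γ M] : Prop :=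
  ∃ (P₁ P₀ : ModuleCat.{w} Γ) (f : P₁ →ₗ[Γ] P₀) (g : ↥P₀ →ₗ[Γ] M),
    Module.Projective Γ P₁ ∧ Module.Projective Γ P₀ ∧
    Function.Injective f ∧ Function.Surjective g ∧ Function.Exact f g

/-- `Ext¹_Γ(M, M) = 0`: every self-extension of `M` splits. -/
def SelfExtSplit (M : Type w) [AddCommGroup M] [Module Γ M] : Prop :=
  ∀ (E : ModuleCat.{w} Γ) (i : M →ₗ[Γ] E) (p : ↥E →ₗ[Γ] M),
    Function.Injective i → Function.Surjective p → Function.Exact i p →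
    ∃ r : ↥E →ₗ[Γ] M, r ∘ₗ i = LinearMap.id

/-- `M` is a (basic) tilting module: `M ∈ mod Γ` is basic with `pd M ≤ 1`,
`Ext¹(M, M) = 0` and `|M| = |Γ|`. -/
def IsTiltingMod (M : Type w) [AddCommGroup M] [Module Γ M] : Prop :=
  Module.Finite Γ M ∧ ModBasic Γ M ∧ PdLeOne Γ M ∧ SelfExtSplit Γ M ∧
  ∃ n : ℕ, NumIndecMod Γ M n ∧ NumIndecMod Γ Γ n

/-- The linear-isomorphism setoid on modules satisfying a predicate `p`. -/
def modSetoid (p : ModuleCat.{w} Γ → Prop) : Setoid {M : ModuleCat.{w} Γ // p M} where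
  r M N := Nonempty (↥M.1 ≃ₗ[Γ] ↥N.1)
  iseqv := ⟨fun _ => ⟨LinearEquiv.refl Γ _⟩, fun ⟨e⟩ => ⟨e.symm⟩, fun ⟨e⟩ ⟨f⟩ => ⟨e.trans f⟩⟩

/-- The componentwise linear-isomorphism setoid on pairs of modules satisfying `p`. -/
def pairSetoid (p : ModuleCat.{w} Γ × ModuleCat.{w} Γ → Prop) :
    Setoid {Mp : ModuleCat.{w} Γ × ModuleCat.{w} Γ // p Mp} where
  r A B := Nonempty (↥A.1.1 ≃ₗ[Γ] ↥B.1.1) ∧ Nonempty (↥A.1.2 ≃ₗ[Γ] ↥B.1.2)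
  iseqv := ⟨fun _ => ⟨⟨LinearEquiv.refl Γ _⟩, ⟨LinearEquiv.refl Γ _⟩⟩,
    fun ⟨⟨e⟩, ⟨f⟩⟩ => ⟨⟨e.symm⟩, ⟨f.symm⟩⟩,
    fun ⟨⟨e⟩, ⟨f⟩⟩ ⟨⟨e'⟩, ⟨f'⟩⟩ => ⟨⟨e.trans e'⟩, ⟨f.trans f'⟩⟩⟩

/-- `(M, P)` is a basic `τ`-rigid pair. -/
def BasicTauRigidPair (Mp : ModuleCat.{w} Γ × ModuleCat.{w} Γ) : Prop :=
  IsTauRigidPair Γ ↥Mp.1 ↥Mp.2 ∧ ModBasic Γ ↥Mp.1 ∧ ModBasic Γ ↥Mp.2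

end Modules

end RelRigid

/-!
Applying `Hom(R, -)` to a triangle `R₁ → R₀ → X → R₁[1]` with `R₀, R₁ ∈ add R` gives, by rigidity
of `R`, a projective presentation `Hom(R, R₁) → Hom(R, R₀) → Hom(R, X) → 0`. If `pd Hom(R, X) ≤ 1`,
Schanuel's lemma makes the kernel of the left map a direct summand of `Hom(R, R₁)`, cut out by an
idempotent of `R₁`; its image `R'` has `R'[1]` a direct summand of `X` lying in `add R[1]`, so it
vanishes and the left map is injective. Injectivity in turn says that every `R[1] → X → R₁[1]`
vanishes, and since `Hom(R₀, R[1]) = 0` every map `X → R[1]` factors through `X → R₁[1]`, which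
turns this into `X(R[1], R[1]) = 0`.
-/

section ProjectiveModules

variable {A : Type*} [Ring A] {K N P : Type*} [AddCommGroup K] [Module A K]
  [AddCommGroup N] [Module A N] [AddCommGroup P] [Module A P]

lemma Module.Projective.of_exact_of_surjective [Module.Projective A N] [Module.Projective A P]
    {f : K →ₗ[A] N} {g : N →ₗ[A] P} (hf : Function.Injective f) (hfg : Function.Exact f g)
    (hg : Function.Surjective g) : Module.Projective A K := by
  obtain ⟨l, hl⟩ := g.exists_rightInverse_of_surjective (LinearMap.range_eq_top.mpr hg)
  obtain ⟨e, hfe, -⟩ := hfg.splitSurjectiveEquiv hf ⟨l, hl⟩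
  refine Module.Projective.of_split f (LinearMap.fst A K P ∘ₗ e.toLinearMap) ?_
  rw [hfe]
  ext
  simp

lemma LinearMap.exists_proj_ker_of_projective_range (φ : K →ₗ[A] N)
    [Module.Projective A (LinearMap.range φ)] :
    ∃ e : K →ₗ[A] K, φ ∘ₗ e = 0 ∧ ∀ x, φ x = 0 → e x = x := by
  obtain ⟨s, hs⟩ := φ.rangeRestrict.exists_rightInverse_of_surjective φ.range_rangeRestrict
  have hφs : ∀ y, φ (s y) = y := fun y => congrArg Subtype.val (LinearMap.congr_fun hs y)
  refine ⟨LinearMap.id - s ∘ₗ φ.rangeRestrict, ?_, fun x hx => ?_⟩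
  · ext x
    simp [hφs]
  · have : φ.rangeRestrict x = 0 := Subtype.ext hx
    simp [this]

end ProjectiveModules

namespace RelRigid

lemma PdLeOne.projective_ker {A M : Type w} [Ring A] [AddCommGroup M] [Module A M]
    (hM : PdLeOne A M) {P : Type*} [AddCommGroup P] [Module A P] [Module.Projective A P]
    {ψ : P →ₗ[A] M} (hψ : Function.Surjective ψ) : Module.Projective A (LinearMap.ker ψ) := by
  obtain ⟨Q₁, Q₀, i, g, hQ₁, hQ₀, hi, hg, hig⟩ := hM
  obtain ⟨α, hα⟩ := Module.projective_lifting_property g ψ hg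
  have hgα : ∀ p, g (α p) = ψ p := LinearMap.congr_fun hα
  have hαK : ∀ x : LinearMap.ker ψ, α x ∈ LinearMap.range i := fun x =>
    (hig _).mp (by rw [hgα]; exact x.2)
  let β : LinearMap.ker ψ →ₗ[A] Q₁ := (LinearEquiv.ofInjective i hi).symm.toLinearMap ∘ₗ
    (α ∘ₗ (LinearMap.ker ψ).subtype).codRestrict _ hαK
  have hiβ : ∀ x, i (β x) = α x := fun x => LinearEquiv.ofInjective_symm_apply (f := i) (h := hi) _
  -- Schanuel: `0 → ker ψ → P × Q₁ → Q₀ → 0` is exact, where `g ∘ α = ψ`.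
  refine Module.Projective.of_exact_of_surjective
    (f := (LinearMap.ker ψ).subtype.prod (-β)) (g := α.coprod i)
    (fun x y hxy => Subtype.ext (congrArg Prod.fst hxy)) (fun ⟨p, q⟩ => ⟨fun h => ?_, ?_⟩) ?_
  · have hpq : α p + i q = 0 := h
    have hp : p ∈ LinearMap.ker ψ := by
      simpa [hgα, hig.apply_apply_eq_zero] using congrArg g hpq
    refine ⟨⟨p, hp⟩, Prod.ext rfl (hi ?_)⟩
    simpa [hiβ] using neg_eq_of_add_eq_zero_right hpq
  · rintro ⟨x, hx⟩
    rw [← hx]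
    simp [hiβ]
  · intro q₀
    obtain ⟨p, hp⟩ := hψ (g q₀)
    obtain ⟨q, hq⟩ := (hig (q₀ - α p)).mp (by simp [hgα, hp])
    exact ⟨(p, q), by simp [hq]⟩

section

variable {C : Type u} [Category.{v} C] [Preadditive C]

@[simp]
lemma homMap_apply (R : C) {X Y : C} (φ : X ⟶ Y) (u : R ⟶ X) : homMap R φ u = u ≫ φ := rfl

section Add

variable [HasFiniteBiproducts C]

lemma inAdd_iff_exists_sum_eq_id {R A : C} :
    InAdd R A ↔ ∃ (n : ℕ) (a : Fin n → (A ⟶ R)) (b : Fin n → (R ⟶ A)), ∑ i, a i ≫ b i = 𝟙 A := by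
  constructor
  · rintro ⟨n, s, p, hsp⟩
    refine ⟨n, fun i => s ≫ biproduct.π _ i, fun i => biproduct.ι (fun _ : Fin n => R) i ≫ p, ?_⟩
    calc _ = s ≫ (∑ i, biproduct.π (fun _ : Fin n => R) i ≫
            biproduct.ι (fun _ : Fin n => R) i) ≫ p := by
          rw [Preadditive.sum_comp, Preadditive.comp_sum]
          simp only [Category.assoc]
      _ = 𝟙 A := by rw [biproduct.total, Category.id_comp, hsp]
  · rintro ⟨n, a, b, hab⟩
    exact ⟨n, biproduct.lift a, biproduct.desc b, by rw [biproduct.lift_desc, hab]⟩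

lemma inAdd_self (R : C) : InAdd R R :=
  inAdd_iff_exists_sum_eq_id.mpr ⟨1, fun _ => 𝟙 R, fun _ => 𝟙 R, by simp⟩

lemma InAdd.of_retract {R A Y : C} (hA : InAdd R A) (s : Y ⟶ A) (p : A ⟶ Y) (hsp : s ≫ p = 𝟙 Y) :
    InAdd R Y := by
  obtain ⟨n, a, b, hab⟩ := inAdd_iff_exists_sum_eq_id.mp hA
  refine inAdd_iff_exists_sum_eq_id.mpr ⟨n, fun i => s ≫ a i, fun i => b i ≫ p, ?_⟩
  calc _ = s ≫ (∑ i, a i ≫ b i) ≫ p := by simp [Preadditive.comp_sum, Preadditive.sum_comp]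
    _ = 𝟙 Y := by rw [hab, Category.id_comp, hsp]

lemma InAdd.hom_ext {R A Y : C} (hA : InAdd R A) {φ φ' : Y ⟶ A}
    (h : ∀ ρ : A ⟶ R, φ ≫ ρ = φ' ≫ ρ) : φ = φ' := by
  obtain ⟨n, a, b, hab⟩ := inAdd_iff_exists_sum_eq_id.mp hA
  rw [← Category.comp_id φ, ← Category.comp_id φ', ← hab]
  simp only [Preadditive.comp_sum, ← Category.assoc, h]

lemma InAdd.hom_ext' {R A Y : C} (hA : InAdd R A) {φ φ' : A ⟶ Y}
    (h : ∀ u : R ⟶ A, u ≫ φ = u ≫ φ') : φ = φ' := by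
  obtain ⟨n, a, b, hab⟩ := inAdd_iff_exists_sum_eq_id.mp hA
  rw [← Category.id_comp φ, ← Category.id_comp φ', ← hab]
  simp only [Preadditive.sum_comp, Category.assoc, h]

lemma FactorsThroughAdd.eq_zero {X U V : C} {f : U ⟶ V} (hf : FactorsThroughAdd X f)
    (h : ∀ (a : U ⟶ X) (b : X ⟶ V), a ≫ b = 0) : f = 0 := by
  obtain ⟨Z, hZ, g, g', rfl⟩ := hf
  obtain ⟨n, a, b, hab⟩ := inAdd_iff_exists_sum_eq_id.mp hZ
  rw [← Category.id_comp g', ← hab]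
  simp only [Preadditive.sum_comp, Preadditive.comp_sum, Category.assoc]
  exact Finset.sum_eq_zero fun i _ => by rw [← Category.assoc, h]

lemma InAdd.exists_homMap_eq {R A Y : C} (hA : InAdd R A)
    (e : (R ⟶ A) →ₗ[End (op R)] (R ⟶ Y)) : ∃ ε : A ⟶ Y, homMap R ε = e := by
  obtain ⟨n, a, b, hab⟩ := inAdd_iff_exists_sum_eq_id.mp hA
  have he : ∀ (v : R ⟶ R) (x : R ⟶ A), v ≫ e x = e (v ≫ x) := fun v x =>
    (e.map_smul (op v) x).symm
  refine ⟨∑ i, a i ≫ e (b i), LinearMap.ext fun u => ?_⟩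
  calc u ≫ ∑ i, a i ≫ e (b i) = ∑ i, e ((u ≫ a i) ≫ b i) := by
        rw [Preadditive.comp_sum]
        exact Finset.sum_congr rfl fun i _ => by rw [← Category.assoc, he]
    _ = e (u ≫ ∑ i, a i ≫ b i) := by
        rw [← map_sum, Preadditive.comp_sum]
        simp only [Category.assoc]
    _ = e u := by rw [hab, Category.comp_id]

lemma InAdd.projective_hom {R A : C} (hA : InAdd R A) :
    Module.Projective (End (op R)) (R ⟶ A) := by
  obtain ⟨n, a, b, hab⟩ := inAdd_iff_exists_sum_eq_id.mp hA
  let coords : (R ⟶ A) →ₗ[End (op R)] (Fin n → End (op R)) :=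
    { toFun u i := (u ≫ a i).op
      map_add' u v := by ext i; simp
      map_smul' g u := by ext i; change (a i).op ≫ (g.unop ≫ u).op = _; simp }
  let combine : (Fin n → End (op R)) →ₗ[End (op R)] (R ⟶ A) :=
    { toFun v := ∑ i, (v i).unop ≫ b i
      map_add' v v' := by
        rw [← Finset.sum_add_distrib]
        exact Finset.sum_congr rfl fun i _ => Preadditive.add_comp _ _ _ _ _ _
      map_smul' g v := by
        change ∑ i, (g * v i).unop ≫ b i = g.unop ≫ ∑ i, (v i).unop ≫ b i
        simp [Preadditive.comp_sum, End.mul_def] }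
  refine Module.Projective.of_split coords combine (LinearMap.ext fun u => ?_)
  change ∑ i, (u ≫ a i) ≫ b i = u
  simp only [Category.assoc, ← Preadditive.comp_sum, hab, Category.comp_id]

variable [HasShift C ℤ]

lemma IsRigidObj.eq_zero_of_inAdd_source {R A : C} (hR : IsRigidObj R) (hA : InAdd R A)
    (u : A ⟶ R⟦(1 : ℤ)⟧) : u = 0 :=
  hA.hom_ext' fun _ => by rw [comp_zero]; exact hR _

variable [∀ n : ℤ, (shiftFunctor C n).Additive]

lemma InAdd.shift {R A : C} (hA : InAdd R A) (n : ℤ) : InAdd (R⟦n⟧) (A⟦n⟧) := by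
  obtain ⟨m, a, b, hab⟩ := inAdd_iff_exists_sum_eq_id.mp hA
  refine inAdd_iff_exists_sum_eq_id.mpr ⟨m, fun i => (a i)⟦n⟧', fun i => (b i)⟦n⟧', ?_⟩
  rw [← (shiftFunctor C n).map_id, ← hab, Functor.map_sum]
  simp only [Functor.map_comp]

lemma IsRigidObj.eq_zero_of_inAdd_target {R A : C} (hR : IsRigidObj R) (hA : InAdd R A)
    (u : R ⟶ A⟦(1 : ℤ)⟧) : u = 0 :=
  (hA.shift 1).hom_ext fun _ => by rw [zero_comp]; exact hR _

end Add

section Triangle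

variable [HasZeroObject C] [HasShift C ℤ] [∀ n : ℤ, (shiftFunctor C n).Additive]
  [Pretriangulated C] {R : C} {T : Triangle C}

lemma homMap_exact (hT : T ∈ distTriang C) :
    Function.Exact (homMap R T.mor₁) (homMap R T.mor₂) := fun u =>
  ⟨fun hu => (Triangle.coyoneda_exact₂ T hT u hu).imp fun _ h => h.symm, by
    rintro ⟨v, rfl⟩
    simp [comp_distTriang_mor_zero₁₂ _ hT]⟩

lemma homMap_mor₂_surjective (hT : T ∈ distTriang C) (h : ∀ u : R ⟶ T.obj₁⟦(1 : ℤ)⟧, u = 0) :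
    Function.Surjective (homMap R T.mor₂) := fun u =>
  (Triangle.coyoneda_exact₃ T hT u (h _)).imp fun _ h => h.symm

lemma homMap_mor₁_injective_iff (hT : T ∈ distTriang C) :
    Function.Injective (homMap R T.mor₁) ↔ ∀ w : R⟦(1 : ℤ)⟧ ⟶ T.obj₃, w ≫ T.mor₃ = 0 := by
  rw [injective_iff_map_eq_zero]
  constructor
  · intro hinj w
    obtain ⟨u, hu⟩ := (shiftFunctor C (1 : ℤ)).map_surjective (w ≫ T.mor₃)
    have hu₁ : u ≫ T.mor₁ = 0 := (shiftFunctor C (1 : ℤ)).map_injective <| by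
      rw [Functor.map_comp, hu, Category.assoc, comp_distTriang_mor_zero₃₁ _ hT, comp_zero,
        Functor.map_zero]
    rw [← hu, hinj u hu₁, Functor.map_zero]
  · intro h u hu
    rw [homMap_apply] at hu
    obtain ⟨w, hw⟩ := Triangle.coyoneda_exact₁ T hT (u⟦(1 : ℤ)⟧')
      (by rw [← Functor.map_comp, hu, Functor.map_zero])
    exact (shiftFunctor C (1 : ℤ)).map_injective (by rw [hw, h, Functor.map_zero])

lemma isSummand_shift_of_comp_mor₁_eq_zero (hT : T ∈ distTriang C) {Y : C} (j : Y ⟶ T.obj₁)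
    (q : T.obj₁ ⟶ Y) (hjq : j ≫ q = 𝟙 Y) (hj : j ≫ T.mor₁ = 0) :
    IsSummand (Y⟦(1 : ℤ)⟧) T.obj₃ := by
  obtain ⟨j', hj'⟩ := Triangle.coyoneda_exact₁ T hT (j⟦(1 : ℤ)⟧')
    (by rw [← Functor.map_comp, hj, Functor.map_zero])
  exact ⟨j', T.mor₃ ≫ q⟦(1 : ℤ)⟧', by
    rw [← Category.assoc, ← hj', ← Functor.map_comp, hjq, (shiftFunctor C (1 : ℤ)).map_id]⟩

variable [HasFiniteBiproducts C]

lemma comp_mor₃_eq_zero_iff (hT : T ∈ distTriang C) (hR : IsRigidObj R) (h₁ : InAdd R T.obj₁)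
    (h₂ : InAdd R T.obj₂) :
    (∀ w : R⟦(1 : ℤ)⟧ ⟶ T.obj₃, w ≫ T.mor₃ = 0) ↔
      ∀ f : R⟦(1 : ℤ)⟧ ⟶ R⟦(1 : ℤ)⟧, FactorsThroughAdd T.obj₃ f → f = 0 := by
  constructor
  · intro h f hf
    refine hf.eq_zero fun a b => ?_
    obtain ⟨d, rfl⟩ := Triangle.yoneda_exact₃ T hT b (hR.eq_zero_of_inAdd_source h₂ _)
    rw [← Category.assoc, h, zero_comp]
  · intro h w
    refine (h₁.shift 1).hom_ext fun ρ => ?_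
    rw [zero_comp, Category.assoc]
    exact h _ ⟨T.obj₃, inAdd_self _, w, _, rfl⟩

variable [IsIdempotentComplete C]

lemma eq_zero_of_idempotent_of_comp_mor₁_eq_zero (hT : T ∈ distTriang C) (h₁ : InAdd R T.obj₁)
    (hX : ∀ Y : C, IsSummand Y T.obj₃ → InAdd (R⟦(1 : ℤ)⟧) Y → IsZero Y)
    {ε : T.obj₁ ⟶ T.obj₁} (hεε : ε ≫ ε = ε) (hε : ε ≫ T.mor₁ = 0) : ε = 0 := by
  obtain ⟨Y, j, q, hjq, rfl⟩ := IsIdempotentComplete.idempotents_split _ ε hεε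
  have hj : j ≫ T.mor₁ = 0 := by
    have := j ≫= hε
    rwa [← Category.assoc, ← Category.assoc, hjq, Category.id_comp, comp_zero] at this
  have hY : IsZero (Y⟦(1 : ℤ)⟧) := hX _ (isSummand_shift_of_comp_mor₁_eq_zero hT j q hjq hj)
    ((h₁.of_retract j q hjq).shift 1)
  have : IsZero Y := ((shiftFunctor C (-1 : ℤ)).map_isZero hY).of_iso
    ((shiftFunctorCompIsoId C (1 : ℤ) (-1) (by norm_num)).app Y).symm
  rw [this.eq_of_src j 0, comp_zero]

lemma homMap_mor₁_injective_of_pdLeOne (hT : T ∈ distTriang C) (hR : IsRigidObj R)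
    (h₁ : InAdd R T.obj₁) (h₂ : InAdd R T.obj₂)
    (hX : ∀ Y : C, IsSummand Y T.obj₃ → InAdd (R⟦(1 : ℤ)⟧) Y → IsZero Y)
    (hpd : PdLeOne (End (op R)) (R ⟶ T.obj₃)) : Function.Injective (homMap R T.mor₁) := by
  have := h₂.projective_hom
  have hK := hpd.projective_ker (homMap_mor₂_surjective hT (hR.eq_zero_of_inAdd_target h₁))
  rw [(homMap_exact hT).linearMap_ker_eq] at hK
  obtain ⟨e, he₀, he⟩ := LinearMap.exists_proj_ker_of_projective_range (homMap R T.mor₁)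
  obtain ⟨ε, rfl⟩ := h₁.exists_homMap_eq e
  have hε : ε ≫ T.mor₁ = 0 := h₁.hom_ext' fun u => by
    simpa using LinearMap.congr_fun he₀ u
  have hεε : ε ≫ ε = ε := h₁.hom_ext' fun u => by
    simpa using he (u ≫ ε) (by simp [hε])
  have hε0 := eq_zero_of_idempotent_of_comp_mor₁_eq_zero hT h₁ hX hεε hε
  rw [injective_iff_map_eq_zero]
  intro u hu
  rw [← he u hu]
  simp [hε0]

lemma pdLeOne_iff_homMap_mor₁_injective (hT : T ∈ distTriang C) (hR : IsRigidObj R)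
    (h₁ : InAdd R T.obj₁) (h₂ : InAdd R T.obj₂)
    (hX : ∀ Y : C, IsSummand Y T.obj₃ → InAdd (R⟦(1 : ℤ)⟧) Y → IsZero Y) :
    PdLeOne (End (op R)) (R ⟶ T.obj₃) ↔ Function.Injective (homMap R T.mor₁) :=
  ⟨homMap_mor₁_injective_of_pdLeOne hT hR h₁ h₂ hX, fun hinj =>
    ⟨ModuleCat.of _ (R ⟶ T.obj₁), ModuleCat.of _ (R ⟶ T.obj₂), homMap R T.mor₁, homMap R T.mor₂,
      h₁.projective_hom, h₂.projective_hom, hinj,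
      homMap_mor₂_surjective hT (hR.eq_zero_of_inAdd_target h₁), homMap_exact hT⟩⟩

end Triangle

end

variable {k : Type w} [Field k] [IsAlgClosed k]
variable {C : Type u} [Category.{v} C] [Preadditive C] [CategoryTheory.Linear k C]
  [HasZeroObject C] [HasShift C ℤ] [∀ n : ℤ, (shiftFunctor C n).Additive]
  [Pretriangulated C] [HasFiniteBiproducts C] [IsIdempotentComplete C]
  [∀ X Y : C, Module.Finite k (X ⟶ Y)]

theorem statement9_general (R : C) (hRrigid : IsRigidObj R)
    (X : C) (hX : InPr R X)
    (hXs : ∀ Y : C, IsSummand Y X → InAdd (R⟦(1 : ℤ)⟧) Y → IsZero Y) :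
    PdLeOne (End (op R)) (R ⟶ X) ↔
      ∀ f : R⟦(1 : ℤ)⟧ ⟶ R⟦(1 : ℤ)⟧, FactorsThroughAdd X f → f = 0 := by
  obtain ⟨R₁, R₀, hR₁, hR₀, f, g, h, hT⟩ := hX
  exact (pdLeOne_iff_homMap_mor₁_injective hT hRrigid hR₁ hR₀ hXs).trans <|
    (homMap_mor₁_injective_iff hT).trans (comp_mor₃_eq_zero_iff hT hRrigid hR₁ hR₀)

/-- **Theorem 2.8, first part.**  Let `R` be a basic rigid object, `Γ = End R`, and
`X ∈ pr(R)` without direct summands in `add (R[1])`.  Then `pd_Γ Hom(R, X) ≤ 1` if and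
only if `X(R[1], R[1]) = 0`. -/
theorem statement9 (R : C) (hRbasic : IsBasic R) (hRrigid : IsRigidObj R)
    (X : C) (hX : InPr R X)
    (hXs : ∀ Y : C, IsSummand Y X → InAdd (R⟦(1 : ℤ)⟧) Y → IsZero Y) :
    PdLeOne (End (op R)) (R ⟶ X) ↔
      ∀ f : R⟦(1 : ℤ)⟧ ⟶ R⟦(1 : ℤ)⟧, FactorsThroughAdd X f → f = 0 :=
  statement9_general R hRrigid X hX hXs

end RelRigid
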